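/- arXiv:2108.10725 — 6 statements merged into one kernel-verified Lean document; each statement's English description precedes it below -/
import Mathlib

section
/- Let σ, ν, μ be Minkowski velocities with ⟨ν,σ⟩ > 0, ⟨σ,μ⟩ > 0 and ⟨ν,μ⟩ > 0. Set ω₁₀ := ω(ν,σ), ω₀₂ := ω(σ,μ), ω₁₂ := ω(ν,μ) and γ₁₀ := 1/√(1 + ⟨ω₁₀,ω₁₀⟩/c²). If γ₁₀ − ⟨ω₁₀,ω₀₂⟩/c² ≠ 0, then ω₁₂ = ω₁₀ + (ω₀₂ + σ)/(γ₁₀ − ⟨ω₁₀,ω₀₂⟩/c²) − σ/γ₁₀. -/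
/-!
Everything reduces to the three scalars ⟨ν,σ⟩, ⟨σ,μ⟩, ⟨ν,μ⟩: the Lorentz factor of ω(ν,σ) is
γ₁₀ = ⟨ν,σ⟩/c², and ⟨ω(ν,σ), ω(σ,μ)⟩ = ⟨ν,σ⟩ − c²⟨ν,μ⟩/⟨σ,μ⟩, so the denominator is
⟨ν,μ⟩/⟨σ,μ⟩. Since ω(σ,μ) + σ = (c²/⟨σ,μ⟩) μ and ω(ν,σ) − (c²/⟨ν,σ⟩) σ = −ν, the right-hand
side collapses to (c²/⟨ν,μ⟩) μ − ν = ω(ν,μ).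
-/

noncomputable section

/-- Minkowski bilinear form on ℝ⁴ with signature +−−−. -/
def mink (u v : Fin 4 → ℝ) : ℝ := u 0 * v 0 - u 1 * v 1 - u 2 * v 2 - u 3 * v 3

/-- Canonical (Oziewicz–Świerk–Bolós) binary relative velocity of μ with respect to ν. -/
def omegaBin (c : ℝ) (ν μ : Fin 4 → ℝ) : Fin 4 → ℝ := (c ^ 2 / mink ν μ) • μ - ν

section RelativeVelocity

variable {c : ℝ} {σ ν μ : Fin 4 → ℝ}

lemma mink_comm (u v : Fin 4 → ℝ) : mink u v = mink v u := by
  simp only [mink]; ring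

lemma mink_smul_sub_smul_sub (a b : ℝ) (x y u v : Fin 4 → ℝ) :
    mink (a • x - y) (b • u - v) =
      a * b * mink x u - a * mink x v - b * mink y u + mink y v := by
  simp only [mink, Pi.sub_apply, Pi.smul_apply, smul_eq_mul]; ring

lemma mink_omegaBin_self (hν : mink ν ν = c ^ 2) (hσ : mink σ σ = c ^ 2)
    (hνσ : mink ν σ ≠ 0) :
    mink (omegaBin c ν σ) (omegaBin c ν σ) = c ^ 2 * ((c ^ 2 / mink ν σ) ^ 2 - 1) := by
  rw [omegaBin, mink_smul_sub_smul_sub, hσ, hν, mink_comm σ ν]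
  field_simp
  ring

lemma one_div_sqrt_one_add_mink_omegaBin_self (hc : c ≠ 0) (hν : mink ν ν = c ^ 2)
    (hσ : mink σ σ = c ^ 2) (hνσ : 0 < mink ν σ) :
    1 / √(1 + mink (omegaBin c ν σ) (omegaBin c ν σ) / c ^ 2) = mink ν σ / c ^ 2 := by
  have hsq : 1 + mink (omegaBin c ν σ) (omegaBin c ν σ) / c ^ 2 = (c ^ 2 / mink ν σ) ^ 2 := by
    rw [mink_omegaBin_self hν hσ hνσ.ne']
    field_simp
    ring
  rw [hsq, Real.sqrt_sq (by positivity), one_div_div]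

lemma mink_omegaBin_omegaBin (hσ : mink σ σ = c ^ 2) (hσμ : mink σ μ ≠ 0) :
    mink (omegaBin c ν σ) (omegaBin c σ μ) = mink ν σ - c ^ 2 * mink ν μ / mink σ μ := by
  rw [omegaBin, omegaBin, mink_smul_sub_smul_sub, hσ]
  field_simp
  ring

lemma omegaBin_eq_add_sub (hσμ : mink σ μ ≠ 0) :
    omegaBin c ν μ = omegaBin c ν σ + (mink ν μ / mink σ μ)⁻¹ • (omegaBin c σ μ + σ)
      - (mink ν σ / c ^ 2)⁻¹ • σ := by
  rw [omegaBin, omegaBin, omegaBin, sub_add_cancel, smul_smul, inv_div, inv_div, mul_comm,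
    div_mul_div_cancel₀ hσμ]
  abel

end RelativeVelocity

theorem binary_composition_general (c : ℝ) (hc : 0 < c) (σ ν μ : Fin 4 → ℝ)
    (hσ : mink σ σ = c ^ 2) (hν : mink ν ν = c ^ 2)
    (hνσ : 0 < mink ν σ) (hσμ : 0 < mink σ μ)
    (ω10 ω02 ω12 : Fin 4 → ℝ)
    (hω10 : ω10 = omegaBin c ν σ) (hω02 : ω02 = omegaBin c σ μ)
    (hω12 : ω12 = omegaBin c ν μ)
    (γ10 : ℝ) (hγ10 : γ10 = 1 / Real.sqrt (1 + mink ω10 ω10 / c ^ 2)) :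
    ω12 = ω10 + (γ10 - mink ω10 ω02 / c ^ 2)⁻¹ • (ω02 + σ) - γ10⁻¹ • σ := by
  have hγ : γ10 = mink ν σ / c ^ 2 := by
    rw [hγ10, hω10, one_div_sqrt_one_add_mink_omegaBin_self hc.ne' hν hσ hνσ]
  have hden : γ10 - mink ω10 ω02 / c ^ 2 = mink ν μ / mink σ μ := by
    rw [hγ, hω10, hω02, mink_omegaBin_omegaBin hσ hσμ.ne']
    field_simp
    ring
  rw [hden, hγ, hω10, hω02, hω12]
  exact omegaBin_eq_add_sub hσμ.ne'

theorem binary_composition (c : ℝ) (hc : 0 < c) (σ ν μ : Fin 4 → ℝ)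
    (hσ : mink σ σ = c ^ 2) (hν : mink ν ν = c ^ 2) (hμ : mink μ μ = c ^ 2)
    (hνσ : 0 < mink ν σ) (hσμ : 0 < mink σ μ) (hνμ : 0 < mink ν μ)
    (ω10 ω02 ω12 : Fin 4 → ℝ)
    (hω10 : ω10 = omegaBin c ν σ) (hω02 : ω02 = omegaBin c σ μ)
    (hω12 : ω12 = omegaBin c ν μ)
    (γ10 : ℝ) (hγ10 : γ10 = 1 / Real.sqrt (1 + mink ω10 ω10 / c ^ 2))
    (hden : γ10 - mink ω10 ω02 / c ^ 2 ≠ 0) :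
    ω12 = ω10 + (γ10 - mink ω10 ω02 / c ^ 2)⁻¹ • (ω02 + σ) - γ10⁻¹ • σ :=
  binary_composition_general c hc σ ν μ hσ hν hνσ hσμ ω10 ω02 ω12 hω10 hω02 hω12 γ10 hγ10
end
end

section
/- For all u, v ∈ ℝ³ with |u| < c and |v| < c, Ungar's formula equals the Urbantke–Celakoska formula for the 3D ternary relative velocity: ((γ_u + γ_v)/(γ_u·γ_v·(1 − u·v/c²) + γ_u² + γ_v² − 1))·(γ_u·u − γ_v·v) = (2(γ_u + γ_v)/((γ_u + γ_v)² + |γ_u·u − γ_v·v|²/c²))·(γ_u·u − γ_v·v). -/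
noncomputable section
open scoped RealInnerProductSpace

/-!
Both formulas scale the same vector `γ_u u - γ_v v`, and the scalar factors agree because the
Urbantke–Celakoska denominator is exactly twice Ungar's: expanding `|γ_u u - γ_v v|²` and using
`γ² |u|²/c² = γ² - 1` eliminates the norms.
-/

theorem lorentz_factor_sq_mul_sq_div {c x γ : ℝ} (hx : x ^ 2 < c ^ 2)
    (hγ : γ = 1 / Real.sqrt (1 - x ^ 2 / c ^ 2)) :
    γ ^ 2 * x ^ 2 / c ^ 2 = γ ^ 2 - 1 := by
  have hc : c ≠ 0 := by rintro rfl; nlinarith [sq_nonneg x]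
  have hpos : 0 < 1 - x ^ 2 / c ^ 2 := by
    rw [sub_pos, div_lt_one (by positivity)]
    exact hx
  have hγsq : γ ^ 2 * (1 - x ^ 2 / c ^ 2) = 1 := by
    rw [hγ, div_pow, Real.sq_sqrt hpos.le, one_pow, one_div_mul_cancel hpos.ne']
  field_simp at hγsq ⊢
  linarith

theorem norm_smul_sub_smul_sq {E : Type*} [NormedAddCommGroup E] [InnerProductSpace ℝ E]
    (a b : ℝ) (u v : E) :
    ‖a • u - b • v‖ ^ 2 = a ^ 2 * ‖u‖ ^ 2 - 2 * (a * b * ⟪u, v⟫) + b ^ 2 * ‖v‖ ^ 2 := by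
  rw [norm_sub_sq_real, norm_smul, norm_smul, real_inner_smul_left, real_inner_smul_right,
    mul_pow, mul_pow, Real.norm_eq_abs, Real.norm_eq_abs, sq_abs, sq_abs]
  ring

theorem urbantke_denom_eq_two_mul_ungar_denom {E : Type*} [NormedAddCommGroup E]
    [InnerProductSpace ℝ E] {c γu γv : ℝ} {u v : E}
    (hu : ‖u‖ ^ 2 < c ^ 2) (hv : ‖v‖ ^ 2 < c ^ 2)
    (hγu : γu = 1 / Real.sqrt (1 - ‖u‖ ^ 2 / c ^ 2))
    (hγv : γv = 1 / Real.sqrt (1 - ‖v‖ ^ 2 / c ^ 2)) :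
    (γu + γv) ^ 2 + ‖γu • u - γv • v‖ ^ 2 / c ^ 2 =
      2 * (γu * γv * (1 - ⟪u, v⟫ / c ^ 2) + γu ^ 2 + γv ^ 2 - 1) := by
  have hc : c ≠ 0 := by rintro rfl; nlinarith [sq_nonneg ‖u‖]
  have hgu := lorentz_factor_sq_mul_sq_div hu hγu
  have hgv := lorentz_factor_sq_mul_sq_div hv hγv
  rw [norm_smul_sub_smul_sq]
  field_simp at hgu hgv ⊢
  linear_combination hgu + hgv

theorem ungar_eq_urbantke_general (c : ℝ) (u v : EuclideanSpace ℝ (Fin 3))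
    (hu : ‖u‖ < c) (hv : ‖v‖ < c) (γu γv : ℝ)
    (hγu : γu = 1 / Real.sqrt (1 - ‖u‖ ^ 2 / c ^ 2))
    (hγv : γv = 1 / Real.sqrt (1 - ‖v‖ ^ 2 / c ^ 2)) :
    ((γu + γv) / (γu * γv * (1 - ⟪u, v⟫ / c ^ 2) + γu ^ 2 + γv ^ 2 - 1)) •
        (γu • u - γv • v) =
      (2 * (γu + γv) / ((γu + γv) ^ 2 + ‖γu • u - γv • v‖ ^ 2 / c ^ 2)) •
        (γu • u - γv • v) := by
  have hu2 : ‖u‖ ^ 2 < c ^ 2 := pow_lt_pow_left₀ hu (norm_nonneg u) two_ne_zero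
  have hv2 : ‖v‖ ^ 2 < c ^ 2 := pow_lt_pow_left₀ hv (norm_nonneg v) two_ne_zero
  rw [urbantke_denom_eq_two_mul_ungar_denom hu2 hv2 hγu hγv, mul_div_mul_left _ _ two_ne_zero]

theorem ungar_eq_urbantke (c : ℝ) (hc : 0 < c) (u v : EuclideanSpace ℝ (Fin 3))
    (hu : ‖u‖ < c) (hv : ‖v‖ < c) (γu γv : ℝ)
    (hγu : γu = 1 / Real.sqrt (1 - ‖u‖ ^ 2 / c ^ 2))
    (hγv : γv = 1 / Real.sqrt (1 - ‖v‖ ^ 2 / c ^ 2)) :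
    ((γu + γv) / (γu * γv * (1 - ⟪u, v⟫ / c ^ 2) + γu ^ 2 + γv ^ 2 - 1)) •
        (γu • u - γv • v) =
      (2 * (γu + γv) / ((γu + γv) ^ 2 + ‖γu • u - γv • v‖ ^ 2 / c ^ 2)) •
        (γu • u - γv • v) :=
  ungar_eq_urbantke_general c u v hu hv γu γv hγu hγv
end
end

section
/- For all u, v ∈ ℝ³ with |u| < c and |v| < c, Dragan's formula equals Ungar's formula for the 3D ternary relative velocity: ((γ_u⁻¹ + γ_v⁻¹)/(1 − u·v/c² + γ_u·γ_v·(1 − |u|²|v|²/c⁴)))·(γ_u·u − γ_v·v) = ((γ_u + γ_v)/(γ_u·γ_v·(1 − u·v/c²) + γ_u² + γ_v² − 1))·(γ_u·u − γ_v·v). -/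
/-! With `x = ‖u‖²/c²` and `y = ‖v‖²/c²`, the Lorentz factors satisfy `γ_u² x = γ_u² - 1` and
`γ_v² y = γ_v² - 1`, so `γ_u² γ_v² (1 - x y) = γ_u² + γ_v² - 1`. Hence multiplying numerator and
denominator of Dragan's coefficient by `γ_u γ_v` gives exactly Ungar's coefficient. -/

open scoped RealInnerProductSpace

section LorentzFactor

variable {E : Type*} [SeminormedAddCommGroup E] {c : ℝ} {u : E}

theorem one_sub_norm_sq_div_sq_pos (hu : ‖u‖ < c) : 0 < 1 - ‖u‖ ^ 2 / c ^ 2 := by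
  have hc : 0 < c := (norm_nonneg u).trans_lt hu
  rw [sub_pos, div_lt_one (by positivity)]
  exact pow_lt_pow_left₀ hu (norm_nonneg u) two_ne_zero

theorem lorentz_factor_sq_mul (hu : ‖u‖ < c) :
    (1 / Real.sqrt (1 - ‖u‖ ^ 2 / c ^ 2)) ^ 2 * (1 - ‖u‖ ^ 2 / c ^ 2) = 1 := by
  have h := one_sub_norm_sq_div_sq_pos hu
  rw [div_pow, one_pow, Real.sq_sqrt h.le, one_div_mul_cancel h.ne']

end LorentzFactor

theorem dragan_coeff_eq_ungar_coeff {K : Type*} [Field K] {γu γv x y p : K}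
    (hu : γu ^ 2 * (1 - x) = 1) (hv : γv ^ 2 * (1 - y) = 1) :
    (γu⁻¹ + γv⁻¹) / (1 - p + γu * γv * (1 - x * y)) =
      (γu + γv) / (γu * γv * (1 - p) + γu ^ 2 + γv ^ 2 - 1) := by
  have hγu : γu ≠ 0 := by rintro rfl; simp at hu
  have hγv : γv ≠ 0 := by rintro rfl; simp at hv
  rw [← mul_div_mul_left _ _ (mul_ne_zero hγu hγv)]
  congr 1
  · field_simp
    ring
  · linear_combination γv ^ 2 * y * hu + (γu ^ 2 - 1) * hv

theorem dragan_eq_ungar_general (c : ℝ) (u v : EuclideanSpace ℝ (Fin 3))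
    (hu : ‖u‖ < c) (hv : ‖v‖ < c) (γu γv : ℝ)
    (hγu : γu = 1 / Real.sqrt (1 - ‖u‖ ^ 2 / c ^ 2))
    (hγv : γv = 1 / Real.sqrt (1 - ‖v‖ ^ 2 / c ^ 2)) :
    ((γu⁻¹ + γv⁻¹) /
        (1 - ⟪u, v⟫ / c ^ 2 + γu * γv * (1 - ‖u‖ ^ 2 * ‖v‖ ^ 2 / c ^ 4))) •
        (γu • u - γv • v) =
      ((γu + γv) / (γu * γv * (1 - ⟪u, v⟫ / c ^ 2) + γu ^ 2 + γv ^ 2 - 1)) •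
        (γu • u - γv • v) := by
  have hu' := lorentz_factor_sq_mul hu
  have hv' := lorentz_factor_sq_mul hv
  rw [← hγu] at hu'
  rw [← hγv] at hv'
  rw [show ‖u‖ ^ 2 * ‖v‖ ^ 2 / c ^ 4 = ‖u‖ ^ 2 / c ^ 2 * (‖v‖ ^ 2 / c ^ 2) by ring,
    dragan_coeff_eq_ungar_coeff hu' hv']

theorem dragan_eq_ungar (c : ℝ) (hc : 0 < c) (u v : EuclideanSpace ℝ (Fin 3))
    (hu : ‖u‖ < c) (hv : ‖v‖ < c) (γu γv : ℝ)
    (hγu : γu = 1 / Real.sqrt (1 - ‖u‖ ^ 2 / c ^ 2))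
    (hγv : γv = 1 / Real.sqrt (1 - ‖v‖ ^ 2 / c ^ 2)) :
    ((γu⁻¹ + γv⁻¹) /
        (1 - ⟪u, v⟫ / c ^ 2 + γu * γv * (1 - ‖u‖ ^ 2 * ‖v‖ ^ 2 / c ^ 4))) •
        (γu • u - γv • v) =
      ((γu + γv) / (γu * γv * (1 - ⟪u, v⟫ / c ^ 2) + γu ^ 2 + γv ^ 2 - 1)) •
        (γu • u - γv • v) :=
  dragan_eq_ungar_general c u v hu hv γu γv hγu hγv
end

section
/- Let W ∈ ℝ³ with 0 ≤ |W| < c, and set γ_W := 1/√(1 − |W|²/c²). Let r, r' ∈ ℝ³ and t, t' ∈ ℝ with t + t' ≠ 0 be related by the passive Lorentz boost with velocity W, i.e. r' = r − γ_W·t·W + (γ_W²/(γ_W + 1))·((r·W)/c²)·W and t' = γ_W·(t − (W·r)/c²). Then W = (1 + γ_W⁻¹)·(r − r')/(t + t'). -/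
/-!
Writing `s := ⟪r, W⟫ / c²`, the boost gives `r - r' = (γ t - γ² s / (γ + 1)) W` and
`t + t' = (γ + 1) t - γ s`, so `r - r' = γ / (γ + 1) · (t + t') W`; dividing by
`γ / (γ + 1) · (t + t')`, which is nonzero since `γ > 0`, recovers `W`.
-/

noncomputable section
open scoped RealInnerProductSpace

theorem sub_boost_eq_smul {K V : Type*} [Field K] [AddCommGroup V] [Module K V]
    {γ t t' s : K} {W r r' : V} (hγ : γ + 1 ≠ 0)
    (hr' : r' = r - (γ * t) • W + (γ ^ 2 / (γ + 1)) • (s • W))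
    (ht' : t' = γ * (t - s)) :
    r - r' = (γ / (γ + 1) * (t + t')) • W := by
  have hcoef : γ * t - γ ^ 2 / (γ + 1) * s = γ / (γ + 1) * (t + γ * (t - s)) := by
    field_simp
    ring
  rw [hr', ht', ← hcoef, smul_smul, sub_smul]
  abel

theorem one_div_sqrt_one_sub_sq_div_sq_pos {v c : ℝ} (hv : |v| < c) :
    0 < 1 / Real.sqrt (1 - v ^ 2 / c ^ 2) := by
  have hc : 0 < c := (abs_nonneg v).trans_lt hv
  obtain ⟨hlow, hhigh⟩ := abs_lt.1 hv
  have hvc : v ^ 2 / c ^ 2 < 1 := (div_lt_one (by positivity)).2 (sq_lt_sq' hlow hhigh)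
  have : 0 < 1 - v ^ 2 / c ^ 2 := sub_pos.2 hvc
  positivity

theorem boost_velocity_from_positions_general (c : ℝ)
    (W : EuclideanSpace ℝ (Fin 3)) (hW : ‖W‖ < c) (γW : ℝ)
    (hγW : γW = 1 / Real.sqrt (1 - ‖W‖ ^ 2 / c ^ 2))
    (r r' : EuclideanSpace ℝ (Fin 3)) (t t' : ℝ) (ht : t + t' ≠ 0)
    (hr' : r' = r - (γW * t) • W + (γW ^ 2 / (γW + 1)) • ((⟪r, W⟫ / c ^ 2) • W))
    (ht' : t' = γW * (t - ⟪W, r⟫ / c ^ 2)) :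
    W = (1 + γW⁻¹) • ((t + t')⁻¹ • (r - r')) := by
  have hγ : 0 < γW := hγW ▸ one_div_sqrt_one_sub_sq_div_sq_pos ((abs_norm W).symm ▸ hW)
  rw [real_inner_comm] at ht'
  rw [sub_boost_eq_smul (by positivity) hr' ht', smul_smul, smul_smul]
  have hcoef : (1 + γW⁻¹) * (t + t')⁻¹ * (γW / (γW + 1) * (t + t')) = 1 := by
    field_simp
  rw [hcoef, one_smul]

theorem boost_velocity_from_positions (c : ℝ) (hc : 0 < c)
    (W : EuclideanSpace ℝ (Fin 3)) (hW : ‖W‖ < c) (γW : ℝ)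
    (hγW : γW = 1 / Real.sqrt (1 - ‖W‖ ^ 2 / c ^ 2))
    (r r' : EuclideanSpace ℝ (Fin 3)) (t t' : ℝ) (ht : t + t' ≠ 0)
    (hr' : r' = r - (γW * t) • W + (γW ^ 2 / (γW + 1)) • ((⟪r, W⟫ / c ^ 2) • W))
    (ht' : t' = γW * (t - ⟪W, r⟫ / c ^ 2)) :
    W = (1 + γW⁻¹) • ((t + t')⁻¹ • (r - r')) :=
  boost_velocity_from_positions_general c W hW γW hγW r r' t t' ht hr' ht'
end
end

section
/- Let W ∈ ℝ³ with 0 ≤ |W| < c, and set γ_W := 1/√(1 − |W|²/c²). Let r, r' ∈ ℝ³ and t, t' ∈ ℝ with t + t' ≠ 0 be related by the passive Lorentz boost with velocity W, i.e. r' = r − γ_W·t·W + (γ_W²/(γ_W + 1))·((r·W)/c²)·W and t' = γ_W·(t − (W·r)/c²). Then Urbantke's formula recovers the boost velocity: W = (2/(1 + |(r − r')/(t + t')|²/c²))·(r − r')/(t + t'). -/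
/-!
The displacement `r - r'` is parallel to `W`, and its coefficient depends on `r` only through
`⟪W, r⟫`, exactly as `t'` does; hence `r - r' = γ/(γ+1) (t + t') W`, so `u := (r - r')/(t + t')` is the rescaled velocity
`γ/(γ+1) W`. Since `γ²|W|²/c² = γ² - 1`, one gets `1 + |u|²/c² = 2γ/(γ+1)`, and the
factor `2/(1 + |u|²/c²)` exactly undoes the rescaling.
-/

noncomputable section
open scoped RealInnerProductSpace

theorem one_div_sqrt_sq_mul_self {y : ℝ} (hy : 0 < y) : (1 / Real.sqrt y) ^ 2 * y = 1 := by
  rw [div_pow, one_pow, Real.sq_sqrt hy.le, one_div_mul_cancel hy.ne']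

theorem boost_sub_eq_smul {E : Type*} [NormedAddCommGroup E] [InnerProductSpace ℝ E]
    {c γ t t' : ℝ} {W r r' : E} (hγ : γ + 1 ≠ 0)
    (hr' : r' = r - (γ * t) • W + (γ ^ 2 / (γ + 1)) • ((⟪r, W⟫ / c ^ 2) • W))
    (ht' : t' = γ * (t - ⟪W, r⟫ / c ^ 2)) :
    r - r' = (γ / (γ + 1) * (t + t')) • W := by
  have hcoef : γ * t - γ ^ 2 / (γ + 1) * (⟪r, W⟫ / c ^ 2) = γ / (γ + 1) * (t + t') := by
    rw [ht', real_inner_comm]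
    field_simp
    ring
  rw [hr', ← hcoef, smul_smul, sub_smul]
  abel

theorem two_div_one_add_norm_sq_smul_rescaled {E : Type*} [NormedAddCommGroup E]
    [NormedSpace ℝ E] {c γ : ℝ} {W : E} (hγ : γ ^ 2 * (1 - ‖W‖ ^ 2 / c ^ 2) = 1)
    (hγ1 : γ + 1 ≠ 0) :
    (2 / (1 + ‖(γ / (γ + 1)) • W‖ ^ 2 / c ^ 2)) • ((γ / (γ + 1)) • W) = W := by
  have hγ0 : γ ≠ 0 := by rintro rfl; simp at hγ
  have hden : 1 + ‖(γ / (γ + 1)) • W‖ ^ 2 / c ^ 2 = 2 * γ / (γ + 1) := by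
    have hx : γ ^ 2 * (‖W‖ ^ 2 / c ^ 2) = γ ^ 2 - 1 := by linear_combination -hγ
    rw [norm_smul, mul_pow, Real.norm_eq_abs, sq_abs, mul_div_assoc, div_pow,
      div_mul_eq_mul_div, hx]
    field_simp
    ring
  rw [hden, smul_smul, show 2 / (2 * γ / (γ + 1)) * (γ / (γ + 1)) = 1 by field_simp, one_smul]

theorem urbantke_formula (c : ℝ) (hc : 0 < c)
    (W : EuclideanSpace ℝ (Fin 3)) (hW : ‖W‖ < c) (γW : ℝ)
    (hγW : γW = 1 / Real.sqrt (1 - ‖W‖ ^ 2 / c ^ 2))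
    (r r' : EuclideanSpace ℝ (Fin 3)) (t t' : ℝ) (ht : t + t' ≠ 0)
    (hr' : r' = r - (γW * t) • W + (γW ^ 2 / (γW + 1)) • ((⟪r, W⟫ / c ^ 2) • W))
    (ht' : t' = γW * (t - ⟪W, r⟫ / c ^ 2)) :
    W = (2 / (1 + ‖(t + t')⁻¹ • (r - r')‖ ^ 2 / c ^ 2)) •
        ((t + t')⁻¹ • (r - r')) := by
  have hsub : 0 < 1 - ‖W‖ ^ 2 / c ^ 2 := by
    rw [sub_pos, div_lt_one (by positivity)]
    exact pow_lt_pow_left₀ hW (norm_nonneg W) two_ne_zero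
  have hγpos : 0 < γW := hγW ▸ by positivity
  have hγsq : γW ^ 2 * (1 - ‖W‖ ^ 2 / c ^ 2) = 1 := hγW ▸ one_div_sqrt_sq_mul_self hsub
  have hγ1 : γW + 1 ≠ 0 := by positivity
  have hu : (t + t')⁻¹ • (r - r') = (γW / (γW + 1)) • W := by
    rw [boost_sub_eq_smul hγ1 hr' ht', smul_smul, mul_comm, mul_assoc, mul_inv_cancel₀ ht,
      mul_one]
  rw [hu, two_div_one_add_norm_sq_smul_rescaled hγsq hγ1]
end
end

section
/- Let σ, ν, μ be Minkowski velocities with ⟨μ,ν⟩ ≠ 0 and ⟨σ,ν+σ⟩ ≠ 0, and define the Einstein–Oziewicz relative velocity ε := (c²/⟨μ,ν⟩)·[μ − (⟨μ,ν+σ⟩/⟨σ,ν+σ⟩)·(ν + σ)] + σ. Then ⟨ε,ε⟩ = c⁶/⟨μ,ν⟩² − c². -/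
/-!
With `w = ν + σ`, the coefficient `⟨μ,w⟩/⟨σ,w⟩` equals `2⟨μ,w⟩/⟨w,w⟩` because `⟨σ,σ⟩ = ⟨ν,ν⟩` gives
`⟨w,w⟩ = 2⟨σ,w⟩`; so `ε = (c²/⟨μ,ν⟩) R μ + σ` with `R` the reflection in the hyperplane orthogonal
to `w`. The reflection is a self-adjoint isometry and maps `σ` to `-ν`, hence `⟨Rμ,Rμ⟩ = c²` and
`⟨Rμ,σ⟩ = ⟨μ,Rσ⟩ = -⟨μ,ν⟩`, and expanding `⟨ε,ε⟩` gives `c⁶/⟨μ,ν⟩² - 2c² + c²`.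
-/

noncomputable section

namespace LinearMap.BilinForm

variable {K V : Type*} [Field K] [AddCommGroup V] [Module K V]

/-- Reflection in the `B`-orthogonal hyperplane of `w` (the identity if `B w w = 0`, as `x / 0 = 0`). -/
def reflection (B : LinearMap.BilinForm K V) (w x : V) : V := x - (2 * B x w / B w w) • w

variable {B : LinearMap.BilinForm K V}

lemma apply_reflection_left (hB : B.IsSymm) (w x y : V) :
    B (B.reflection w x) y = B x (B.reflection w y) := by
  simp only [reflection, map_sub, map_smul, LinearMap.sub_apply, LinearMap.smul_apply, smul_eq_mul,
    hB.eq w y]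
  ring

lemma apply_reflection_reflection (hB : B.IsSymm) {w : V} (hw : B w w ≠ 0) (x y : V) :
    B (B.reflection w x) (B.reflection w y) = B x y := by
  simp only [reflection, map_sub, map_smul, LinearMap.sub_apply, LinearMap.smul_apply, smul_eq_mul,
    hB.eq w y]
  field_simp
  ring

lemma apply_add_add_of_apply_self_eq (hB : B.IsSymm) {u v : V} (h : B u u = B v v) :
    B (v + u) (v + u) = 2 * B u (v + u) := by
  simp only [map_add, LinearMap.add_apply, h, hB.eq u v]
  ring

lemma reflection_add_apply_right (hB : B.IsSymm) {u v : V} (h : B u u = B v v)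
    (hw : B (v + u) (v + u) ≠ 0) : B.reflection (v + u) u = -v := by
  rw [reflection, ← apply_add_add_of_apply_self_eq hB h, div_self hw, one_smul]
  abel

theorem IsSymm.apply_einstein_oziewicz_self [NeZero (2 : K)] (hB : B.IsSymm) {c : K} {σ ν μ : V}
    (hσ : B σ σ = c ^ 2) (hν : B ν ν = c ^ 2) (hμ : B μ μ = c ^ 2)
    (hμν : B μ ν ≠ 0) (hσνσ : B σ (ν + σ) ≠ 0) {ε : V}
    (hε : ε = (c ^ 2 / B μ ν) • (μ - (B μ (ν + σ) / B σ (ν + σ)) • (ν + σ)) + σ) :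
    B ε ε = c ^ 6 / (B μ ν) ^ 2 - c ^ 2 := by
  have hw : B (ν + σ) (ν + σ) = 2 * B σ (ν + σ) :=
    apply_add_add_of_apply_self_eq hB (hσ.trans hν.symm)
  have hw0 : B (ν + σ) (ν + σ) ≠ 0 := by
    rw [hw]
    exact mul_ne_zero two_ne_zero hσνσ
  have hεR : ε = (c ^ 2 / B μ ν) • B.reflection (ν + σ) μ + σ := by
    rw [hε, reflection, hw, mul_div_mul_left _ _ two_ne_zero]
  have hRμ : B (B.reflection (ν + σ) μ) (B.reflection (ν + σ) μ) = c ^ 2 := by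
    rw [apply_reflection_reflection hB hw0, hμ]
  have hRμσ : B (B.reflection (ν + σ) μ) σ = -B μ ν := by
    rw [apply_reflection_left hB, reflection_add_apply_right hB (hσ.trans hν.symm) hw0, map_neg]
  rw [hεR]
  simp only [map_add, map_smul, LinearMap.add_apply, LinearMap.smul_apply, smul_eq_mul, hRμ,
    hRμσ, hB.eq σ, hσ]
  field_simp
  ring

end LinearMap.BilinForm

def minkowskiForm : LinearMap.BilinForm ℝ (Fin 4 → ℝ) :=
  LinearMap.mk₂ ℝ mink
    (fun _ _ _ ↦ by simp only [mink, Pi.add_apply]; ring)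
    (fun _ _ _ ↦ by simp only [mink, Pi.smul_apply, smul_eq_mul]; ring)
    (fun _ _ _ ↦ by simp only [mink, Pi.add_apply]; ring)
    (fun _ _ _ ↦ by simp only [mink, Pi.smul_apply, smul_eq_mul]; ring)

lemma minkowskiForm_isSymm : minkowskiForm.IsSymm :=
  ⟨fun u v ↦ by simp only [minkowskiForm, LinearMap.mk₂_apply, mink]; ring⟩

theorem einstein_oziewicz_norm_general (c : ℝ) (σ ν μ : Fin 4 → ℝ)
    (hσ : mink σ σ = c ^ 2) (hν : mink ν ν = c ^ 2) (hμ : mink μ μ = c ^ 2)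
    (hμν : mink μ ν ≠ 0) (hσνσ : mink σ (ν + σ) ≠ 0)
    (ε : Fin 4 → ℝ)
    (hε : ε = (c ^ 2 / mink μ ν) •
        (μ - (mink μ (ν + σ) / mink σ (ν + σ)) • (ν + σ)) + σ) :
    mink ε ε = c ^ 6 / (mink μ ν) ^ 2 - c ^ 2 := by
  exact minkowskiForm_isSymm.apply_einstein_oziewicz_self hσ hν hμ hμν hσνσ hε

theorem einstein_oziewicz_norm (c : ℝ) (hc : 0 < c) (σ ν μ : Fin 4 → ℝ)
    (hσ : mink σ σ = c ^ 2) (hν : mink ν ν = c ^ 2) (hμ : mink μ μ = c ^ 2)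
    (hμν : mink μ ν ≠ 0) (hσνσ : mink σ (ν + σ) ≠ 0)
    (ε : Fin 4 → ℝ)
    (hε : ε = (c ^ 2 / mink μ ν) •
        (μ - (mink μ (ν + σ) / mink σ (ν + σ)) • (ν + σ)) + σ) :
    mink ε ε = c ^ 6 / (mink μ ν) ^ 2 - c ^ 2 :=
  einstein_oziewicz_norm_general c σ ν μ hσ hν hμ hμν hσνσ ε hε
end
end
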